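/- Let T ∈ ℕ with T ≥ 1, r > 0, α₀ ∈ ℝ, and (t,x) ∈ ℤ² with sin(η₁) ≠ 0. With β₀ replaced by the purely imaginary value i·β̂₀ (β̂₀ ∈ ℝ) in the definitions of ζ_j, η_j (so that ζ_j, η_j for j = 2,…,5 are complex), the limit lim_{β̂₀→+∞} ∏_{j=1}^{5} [sin(ζ_j)/sin(η_j)] = sin(ζ₁)/sin(η₁) holds, where sin denotes the complex sine. Explicitly, sin(ζ₁)/sin(η₁) = sin((2α₀ − (3T+1) + (3t−x))/(2r)) / sin((2α₀ − (3T+1) + (t+x))/(2r)). -/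

import Mathlib

/-!
For `j = 2, …, 5` one has `ζⱼ = ηⱼ + d` with `d = (x - t)/(2r)`, and
`sin (w + d) / sin w = e^{-id} (1 - e^{2i(w+d)}) / (1 - e^{2iw})`, which tends to `e^{∓id}` as
`Im w → ±∞`. Since `Im η₂ = Im η₃ = β̂₀/r` and `Im η₄ = Im η₅ = -β̂₀/r`, the four limits cancel and
only the real factor `sin ζ₁ / sin η₁` survives.
-/

open scoped Real
open Filter

/-- The numerator arguments `ζ₁, …, ζ₅` with `β₀` replaced by the purely
imaginary value `i·β̂₀`. -/
noncomputable def zetaArgC (T : ℕ) (r α₀ : ℝ) (b : ℝ) (t x : ℤ) : Fin 5 → ℂ :=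
  ![(((2 * α₀ - (3 * (T : ℝ) + 1) + (3 * (t : ℝ) - (x : ℝ))) / (2 * r) : ℝ) : ℂ),
    (2 * (Complex.I * (b : ℂ)) - (3 * (T : ℂ) + 1) + 2 * ((t : ℂ) + (x : ℂ))) / (2 * (r : ℂ)),
    (2 * (Complex.I * (b : ℂ)) - (3 * (T : ℂ) + 1) + 2 * ((t : ℂ) + (x : ℂ))) / (2 * (r : ℂ))
      - 1 / (r : ℂ),
    (2 * ((α₀ : ℂ) - Complex.I * (b : ℂ)) - ((t : ℂ) + (x : ℂ))) / (2 * (r : ℂ)),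
    (2 * ((α₀ : ℂ) - Complex.I * (b : ℂ)) - ((t : ℂ) + (x : ℂ))) / (2 * (r : ℂ)) + 1 / (r : ℂ)]

/-- The denominator arguments `η₁, …, η₅` with `β₀` replaced by the purely
imaginary value `i·β̂₀`. -/
noncomputable def etaArgC (T : ℕ) (r α₀ : ℝ) (b : ℝ) (t x : ℤ) : Fin 5 → ℂ :=
  ![(((2 * α₀ - (3 * (T : ℝ) + 1) + ((t : ℝ) + (x : ℝ))) / (2 * r) : ℝ) : ℂ),
    (2 * (Complex.I * (b : ℂ)) - (3 * (T : ℂ) + 1) + (3 * (t : ℂ) + (x : ℂ))) / (2 * (r : ℂ)),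
    (2 * (Complex.I * (b : ℂ)) - (3 * (T : ℂ) + 1) + (3 * (t : ℂ) + (x : ℂ))) / (2 * (r : ℂ))
      - 1 / (r : ℂ),
    ((α₀ : ℂ) - Complex.I * (b : ℂ) - (x : ℂ)) / (r : ℂ),
    ((α₀ : ℂ) - Complex.I * (b : ℂ) - (x : ℂ)) / (r : ℂ) + 1 / (r : ℂ)]

namespace Complex

theorem tendsto_exp_two_mul_I_mul_zero_of_im_atTop {α : Type*} {l : Filter α} {w : α → ℂ}
    (hw : Tendsto (fun b => (w b).im) l atTop) :
    Tendsto (fun b => exp (2 * I * w b)) l (nhds 0) := by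
  have hnorm (b : α) : ‖exp (2 * I * w b)‖ = Real.exp (-(2 * (w b).im)) := by
    simp [norm_exp]
  rw [tendsto_zero_iff_norm_tendsto_zero]
  simp only [hnorm]
  exact Real.tendsto_exp_atBot.comp (tendsto_neg_atTop_atBot.comp (hw.const_mul_atTop two_pos))

/-- No hypothesis `sin v ≠ 0` is needed: `sin v = 0` exactly when `exp (2 * I * v) = 1`, and then
both sides are `0`. -/
theorem sin_div_sin_eq (u v : ℂ) :
    sin u / sin v = exp (-((u - v) * I)) *
      ((1 - exp (2 * I * u)) / (1 - exp (2 * I * v))) := by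
  have key (z : ℂ) : sin z = exp (-z * I) * (1 - exp (2 * I * z)) * (I / 2) := by
    rw [sin, mul_sub, mul_one, ← exp_add]
    ring_nf
  rw [key, key, mul_div_mul_right _ _ (by simp : (I / 2 : ℂ) ≠ 0), mul_div_mul_comm,
    ← exp_sub]
  ring_nf

theorem tendsto_sin_add_div_sin_of_im_atTop {α : Type*} {l : Filter α} {w : α → ℂ}
    (hw : Tendsto (fun b => (w b).im) l atTop) (d : ℂ) :
    Tendsto (fun b => sin (w b + d) / sin (w b)) l (nhds (exp (-(d * I)))) := by
  have hwd : Tendsto (fun b => (w b + d).im) l atTop := by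
    simpa using tendsto_atTop_add_const_right l d.im hw
  have hratio : Tendsto (fun b => (1 - exp (2 * I * (w b + d))) / (1 - exp (2 * I * w b))) l
      (nhds ((1 - 0) / (1 - 0))) :=
    (tendsto_const_nhds.sub (tendsto_exp_two_mul_I_mul_zero_of_im_atTop hwd)).div
      (tendsto_const_nhds.sub (tendsto_exp_two_mul_I_mul_zero_of_im_atTop hw)) (by simp)
  simpa [sin_div_sin_eq] using (tendsto_const_nhds (x := exp (-(d * I)))).mul hratio

theorem tendsto_sin_add_div_sin_of_im_atBot {α : Type*} {l : Filter α} {w : α → ℂ}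
    (hw : Tendsto (fun b => (w b).im) l atBot) (d : ℂ) :
    Tendsto (fun b => sin (w b + d) / sin (w b)) l (nhds (exp (d * I))) := by
  have hneg : Tendsto (fun b => (-w b).im) l atTop := by
    simp only [neg_im]
    exact tendsto_neg_atBot_atTop.comp hw
  have h := tendsto_sin_add_div_sin_of_im_atTop hneg (-d)
  simpa only [← neg_add, sin_neg, neg_div_neg_eq, neg_mul, neg_neg] using h

end Complex

section

variable (T : ℕ) (r α₀ : ℝ) (t x : ℤ)

theorem zetaArgC_eq_etaArgC_add (b : ℝ) {j : Fin 5} (hj : j ≠ 0) :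
    zetaArgC T r α₀ b t x j = etaArgC T r α₀ b t x j + ((x : ℂ) - t) / (2 * r) := by
  fin_cases j <;> simp [zetaArgC, etaArgC] at hj ⊢ <;> ring

theorem sin_zetaArgC_zero_div_sin_etaArgC_zero (b : ℝ) :
    Complex.sin (zetaArgC T r α₀ b t x 0) / Complex.sin (etaArgC T r α₀ b t x 0) =
      ((Real.sin ((2 * α₀ - (3 * (T : ℝ) + 1) + (3 * (t : ℝ) - (x : ℝ))) / (2 * r)) /
        Real.sin ((2 * α₀ - (3 * (T : ℝ) + 1) + ((t : ℝ) + (x : ℝ))) / (2 * r)) : ℝ) : ℂ) := by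
  simp [zetaArgC, etaArgC, Complex.ofReal_sin]

theorem tendsto_etaArgC_im_atTop (hr : 0 < r) {j : Fin 5} (hj : j = 1 ∨ j = 2) :
    Tendsto (fun b => (etaArgC T r α₀ b t x j).im) atTop atTop := by
  have him (b : ℝ) : (etaArgC T r α₀ b t x j).im = b / r := by
    rcases hj with rfl | rfl <;> simp [etaArgC, Complex.div_im] <;> field_simp
  simp only [him]
  exact tendsto_id.atTop_div_const hr

theorem tendsto_etaArgC_im_atBot (hr : 0 < r) {j : Fin 5} (hj : j = 3 ∨ j = 4) :
    Tendsto (fun b => (etaArgC T r α₀ b t x j).im) atTop atBot := by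
  have him (b : ℝ) : (etaArgC T r α₀ b t x j).im = -(b / r) := by
    rcases hj with rfl | rfl <;> simp [etaArgC, Complex.div_im] <;> field_simp
  simp only [him]
  exact tendsto_neg_atTop_atBot.comp (tendsto_id.atTop_div_const hr)

end

theorem trig_weight_simplified_limit_general (T : ℕ) (r α₀ : ℝ) (hr : 0 < r)
    (t x : ℤ) :
    Tendsto (fun b : ℝ => ∏ j : Fin 5,
        Complex.sin (zetaArgC T r α₀ b t x j) / Complex.sin (etaArgC T r α₀ b t x j))
      atTop
      (nhds (((Real.sin ((2 * α₀ - (3 * (T : ℝ) + 1) + (3 * (t : ℝ) - (x : ℝ))) / (2 * r)) /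
        Real.sin ((2 * α₀ - (3 * (T : ℝ) + 1) + ((t : ℝ) + (x : ℝ))) / (2 * r)) : ℝ) : ℂ))) := by
  set d : ℂ := ((x : ℂ) - t) / (2 * r)
  have hζ (j : Fin 5) (hj : j ≠ 0) (b : ℝ) :
      zetaArgC T r α₀ b t x j = etaArgC T r α₀ b t x j + d :=
    zetaArgC_eq_etaArgC_add T r α₀ t x b hj
  have hup (j : Fin 5) (hj : j = 1 ∨ j = 2) :=
    Complex.tendsto_sin_add_div_sin_of_im_atTop (tendsto_etaArgC_im_atTop T r α₀ t x hr hj) d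
  have hdown (j : Fin 5) (hj : j = 3 ∨ j = 4) :=
    Complex.tendsto_sin_add_div_sin_of_im_atBot (tendsto_etaArgC_im_atBot T r α₀ t x hr hj) d
  simp only [Fin.prod_univ_five, sin_zetaArgC_zero_div_sin_etaArgC_zero, hζ 1 (by decide),
    hζ 2 (by decide), hζ 3 (by decide), hζ 4 (by decide)]
  convert (((tendsto_const_nhds.mul (hup 1 (by simp))).mul (hup 2 (by simp))).mul
    (hdown 3 (by simp))).mul (hdown 4 (by simp)) using 2
  simp only [mul_assoc, ← Complex.exp_add]
  rw [show -(d * Complex.I) + -(d * Complex.I) + d * Complex.I + d * Complex.I = 0 by ring,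
    Complex.exp_zero, mul_one]

/-- The reduction from the trigonometric to the simplified trigonometric elementary
weight: `q̃(t,x) = lim_{β̂₀→∞} q̂(t,x; r, α₀, iβ̂₀)`, explicitly
`q̃(t,x) = sin((2α₀ − (3T+1) + (3t−x))/(2r)) / sin((2α₀ − (3T+1) + (t+x))/(2r))`. -/
theorem trig_weight_simplified_limit (T : ℕ) (hT : 1 ≤ T) (r α₀ : ℝ) (hr : 0 < r)
    (t x : ℤ)
    (hne : Real.sin ((2 * α₀ - (3 * (T : ℝ) + 1) + ((t : ℝ) + (x : ℝ))) / (2 * r)) ≠ 0) :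
    Tendsto (fun b : ℝ => ∏ j : Fin 5,
        Complex.sin (zetaArgC T r α₀ b t x j) / Complex.sin (etaArgC T r α₀ b t x j))
      atTop
      (nhds (((Real.sin ((2 * α₀ - (3 * (T : ℝ) + 1) + (3 * (t : ℝ) - (x : ℝ))) / (2 * r)) /
        Real.sin ((2 * α₀ - (3 * (T : ℝ) + 1) + ((t : ℝ) + (x : ℝ))) / (2 * r)) : ℝ) : ℂ))) :=
  trig_weight_simplified_limit_general T r α₀ hr t x
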